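/- arXiv:2306.09138 — 3 statements merged into one kernel-verified Lean document; each statement's English description precedes it below -/
import Mathlib

section
/- Theorem 4.4 (Brave semantics characterization): Let K be a finite set of axioms with a monotone entailment predicate ent for a query Q and a monotone inconsistency predicate inc (w ⊆ w', inc w implies inc w'); consistency of w means ¬inc w. Assume the TBox T ⊆ K is consistent and all worlds contain T. Then Q holds in at least one repair (Brave semantics) if and only if there exists a justification J for Q (minimal set with ent J) such that J ∪ T is consistent, i.e., ¬inc(J ∪ T). -/
/-! A minimal entailing subset of `R ∪ T` is a justification, consistent with `T` because `inc`
is monotone. Conversely, the ABox part `J \ T` of a justification consistent with `T` extends,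
by finiteness, to a maximal consistent subset of `A`, and monotonicity of `ent` carries the
entailment of `J` over to that repair. -/

namespace Finset

variable {α : Type*}

theorem exists_minimal_subset (P : Finset α → Prop) {s : Finset α} (hs : P s) :
    ∃ t ⊆ s, P t ∧ ∀ t' ⊆ t, P t' → t' = t := by
  obtain ⟨t, hts, ht⟩ := exists_minimal_le_of_wellFoundedLT P s hs
  exact ⟨t, hts, ht.prop, fun _ ht't hPt' => ht.eq_of_le hPt' ht't⟩

theorem exists_maximal_subset_of_subset (P : Finset α → Prop) {s A : Finset α} (hsA : s ⊆ A)
    (hs : P s) : ∃ t, s ⊆ t ∧ t ⊆ A ∧ P t ∧ ∀ t', t' ⊆ A → t ⊆ t' → P t' → t' = t := by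
  have hfin : {t : Finset α | t ⊆ A ∧ P t}.Finite :=
    A.powerset.finite_toSet.subset fun t ht => mem_powerset.mpr ht.1
  obtain ⟨t, hst, ht⟩ := hfin.exists_le_maximal ⟨hsA, hs⟩
  exact ⟨t, hst, ht.prop.1, ht.prop.2,
    fun t' ht'A htt' hPt' => (ht.eq_of_le ⟨ht'A, hPt'⟩ htt').symm⟩

end Finset

open Finset

theorem brave_characterization_general {α : Type*} [DecidableEq α]
    (A T : Finset α)
    (ent : Finset α → Prop) (inc : Finset α → Prop)
    (hent : ∀ w w' : Finset α, w ⊆ w' → ent w → ent w')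
    (hinc : ∀ w w' : Finset α, w ⊆ w' → inc w → inc w') :
    (∃ R : Finset α, R ⊆ A ∧ ¬ inc (R ∪ T) ∧
        (∀ R' : Finset α, R' ⊆ A → R ⊆ R' → ¬ inc (R' ∪ T) → R' = R) ∧
        ent (R ∪ T)) ↔
    (∃ J : Finset α, J ⊆ A ∪ T ∧ ent J ∧ (∀ J' ⊆ J, ent J' → J' = J) ∧
        ¬ inc (J ∪ T)) := by
  constructor
  · rintro ⟨R, hRA, hRcons, -, hRent⟩
    obtain ⟨J, hJR, hJent, hJmin⟩ := exists_minimal_subset ent hRent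
    have hJT : J ∪ T ⊆ R ∪ T := union_subset hJR subset_union_right
    exact ⟨J, hJR.trans (union_subset_union hRA subset_rfl), hJent, hJmin,
      fun h => hRcons (hinc _ _ hJT h)⟩
  · rintro ⟨J, hJAT, hJent, -, hJcons⟩
    have hJA : J \ T ⊆ A := sdiff_le_iff.mpr (by rwa [sup_eq_union, union_comm])
    have hcons : ¬ inc ((J \ T) ∪ T) := by rwa [sdiff_union_self_eq_union]
    obtain ⟨R, hJR, hRA, hRcons, hRmax⟩ :=
      exists_maximal_subset_of_subset (fun R => ¬ inc (R ∪ T)) hJA hcons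
    have hJ : J ⊆ R ∪ T := calc
      J ⊆ (J \ T) ∪ T := by rw [sdiff_union_self_eq_union]; exact subset_union_left
      _ ⊆ R ∪ T := union_subset_union hJR subset_rfl
    exact ⟨R, hRA, hRcons, hRmax, hent _ _ hJ hJent⟩

/-- Theorem 4.4 (Brave semantics): Q holds in at least one repair iff there is a
justification J for Q such that J ∪ T is consistent. -/
theorem brave_characterization {α : Type*} [DecidableEq α]
    (A T : Finset α)
    (ent : Finset α → Prop) (inc : Finset α → Prop)
    (hent : ∀ w w' : Finset α, w ⊆ w' → ent w → ent w')
    (hinc : ∀ w w' : Finset α, w ⊆ w' → inc w → inc w')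
    (hT : ¬ inc T) :
    (∃ R : Finset α, R ⊆ A ∧ ¬ inc (R ∪ T) ∧
        (∀ R' : Finset α, R' ⊆ A → R ⊆ R' → ¬ inc (R' ∪ T) → R' = R) ∧
        ent (R ∪ T)) ↔
    (∃ J : Finset α, J ⊆ A ∪ T ∧ ent J ∧ (∀ J' ⊆ J, ent J' → J' = J) ∧
        ¬ inc (J ∪ T)) :=
  brave_characterization_general A T ent inc hent hinc
end

section
/- Theorem 4.9 (IAR semantics characterization): Let K = (A, T) with monotone entailment ent and downward-closed consistency. Let E be the set of all ABox axioms appearing in at least one justification for the inconsistency (minimal inconsistent subsets). Then Q holds in the intersection of all repairs together with T (IAR semantics), i.e., ent(D ∪ T) where D = ⋂_{R repair} R, if there exists a justification J for Q with J ∩ E = ∅ and J ⊆ A ∪ T. Conversely, if every justification for Q contains an axiom of E, then Q does not hold under IAR, provided each axiom of E is excluded from at least one repair. -/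
/-!
If an ABox axiom `x` is missing from a repair `R`, maximality makes `insert x R ∪ T`
inconsistent, and a minimal inconsistent subset of it must contain `x` because `R ∪ T` is
consistent. So axioms outside every conflict lie in every repair, and a justification avoiding
the conflicts sits inside `D ∪ T`. Conversely, a minimal entailing subset of `D ∪ T` is a
justification, hence meets some conflict in an axiom of `D`, which some repair omits; this
contradicts the definition of `D`.
-/

open Finset

namespace Finset

variable {α : Type*}

lemma exists_subset_forall_subset_eq {P : Finset α → Prop} {S : Finset α} (hS : P S) :
    ∃ M ⊆ S, P M ∧ ∀ M' ⊆ M, P M' → M' = M := by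
  obtain ⟨M, hMS, hM⟩ := exists_minimal_le_of_wellFoundedLT P S hS
  exact ⟨M, hMS, hM.prop, fun _ hM'M hM' => hM.eq_of_le hM' hM'M⟩

end Finset

section Repairs

variable {α : Type*} [DecidableEq α] (cons : Finset α → Prop) (A T : Finset α)

def IsRepair (R : Finset α) : Prop :=
  R ⊆ A ∧ cons (R ∪ T) ∧ ∀ R' ⊆ A, R ⊆ R' → cons (R' ∪ T) → R' = R

def IsConflict (C : Finset α) : Prop :=
  C ⊆ A ∪ T ∧ ¬ cons C ∧ ∀ C' ⊆ C, ¬ cons C' → C' = C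

variable {cons A T}

theorem IsRepair.exists_isConflict_mem_of_notMem
    (hanti : ∀ S S' : Finset α, S ⊆ S' → cons S' → cons S)
    {R : Finset α} (hR : IsRepair cons A T R) {x : α} (hxA : x ∈ A) (hxR : x ∉ R) :
    ∃ C, IsConflict cons A T C ∧ x ∈ C := by
  obtain ⟨hRA, hRcons, hRmax⟩ := hR
  have hinc : ¬ cons (insert x R ∪ T) := fun hc =>
    hxR (hRmax _ (insert_subset hxA hRA) (subset_insert x R) hc ▸ mem_insert_self x R)
  obtain ⟨C, hCsub, hCinc, hCmin⟩ := exists_subset_forall_subset_eq (P := (¬ cons ·)) hinc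
  have hxC : x ∈ C := by
    by_contra hxC
    refine hCinc (hanti C (R ∪ T) (fun y hy => ?_) hRcons)
    have hyx : y ≠ x := fun h => hxC (h ▸ hy)
    simpa [hyx] using hCsub hy
  have hCAT : C ⊆ A ∪ T :=
    hCsub.trans (union_subset_union (insert_subset hxA hRA) subset_rfl)
  exact ⟨C, ⟨hCAT, hCinc, hCmin⟩, hxC⟩

end Repairs

theorem iar_characterization_general {α : Type*} [DecidableEq α]
    (A T : Finset α) (hAT : Disjoint A T)
    (ent : Finset α → Prop) (cons : Finset α → Prop)
    (hent : ∀ w w' : Finset α, w ⊆ w' → ent w → ent w')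
    (hanti : ∀ S S' : Finset α, S ⊆ S' → cons S' → cons S)
    (Ec : Finset α)
    (hEc : ∀ a, a ∈ Ec ↔ a ∈ A ∧ ∃ C : Finset α, C ⊆ A ∪ T ∧ ¬ cons C ∧
        (∀ C' ⊆ C, ¬ cons C' → C' = C) ∧ a ∈ C)
    (D : Finset α)
    (hD : ∀ a, a ∈ D ↔ a ∈ A ∧ ∀ R : Finset α, (R ⊆ A ∧ cons (R ∪ T) ∧
        ∀ R' : Finset α, R' ⊆ A → R ⊆ R' → cons (R' ∪ T) → R' = R) → a ∈ R) :
    ((∃ J : Finset α, J ⊆ A ∪ T ∧ ent J ∧ (∀ J' ⊆ J, ent J' → J' = J) ∧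
        J ∩ Ec = ∅) → ent (D ∪ T)) ∧
    (((∀ J : Finset α, J ⊆ A ∪ T → ent J → (∀ J' ⊆ J, ent J' → J' = J) →
        (J ∩ Ec).Nonempty) ∧
      (∀ a ∈ Ec, ∃ R : Finset α, (R ⊆ A ∧ cons (R ∪ T) ∧
        ∀ R' : Finset α, R' ⊆ A → R ⊆ R' → cons (R' ∪ T) → R' = R) ∧ a ∉ R)) →
      ¬ ent (D ∪ T)) := by
  have mem_D_of_notMem_Ec : ∀ x ∈ A, x ∉ Ec → x ∈ D := fun x hxA hxEc =>
    (hD x).2 ⟨hxA, fun R (hR : IsRepair cons A T R) => by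
      by_contra hxR
      obtain ⟨C, ⟨hCAT, hCinc, hCmin⟩, hxC⟩ :=
        hR.exists_isConflict_mem_of_notMem hanti hxA hxR
      exact hxEc ((hEc x).2 ⟨hxA, C, hCAT, hCinc, hCmin, hxC⟩)⟩
  constructor
  · rintro ⟨J, hJAT, hJent, -, hJEc⟩
    refine hent J _ (fun x hxJ => ?_) hJent
    have hxEc : x ∉ Ec := disjoint_left.1 (disjoint_iff_inter_eq_empty.2 hJEc) hxJ
    rcases mem_union.1 (hJAT hxJ) with hxA | hxT
    · exact mem_union_left T (mem_D_of_notMem_Ec x hxA hxEc)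
    · exact mem_union_right D hxT
  · rintro ⟨hJEc, hEcRepair⟩ hDT
    obtain ⟨J, hJDT, hJent, hJmin⟩ := exists_subset_forall_subset_eq hDT
    have hDA : D ⊆ A := fun a ha => ((hD a).1 ha).1
    obtain ⟨a, ha⟩ := hJEc J (hJDT.trans (union_subset_union hDA subset_rfl)) hJent hJmin
    obtain ⟨haJ, haEc⟩ := mem_inter.1 ha
    have haA : a ∈ A := ((hEc a).1 haEc).1
    have haD : a ∈ D := (mem_union.1 (hJDT haJ)).resolve_right (disjoint_left.1 hAT haA)
    obtain ⟨R, hR, haR⟩ := hEcRepair a haEc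
    exact haR (((hD a).1 haD).2 R hR)

/-- Theorem 4.9 (IAR semantics characterization). `Ec` is the set of ABox axioms occurring in
some minimal inconsistent subset of `A ∪ T`; `D` is the intersection of all repairs.
If Q has a justification disjoint from `Ec`, then Q holds under IAR; conversely, if every
justification for Q meets `Ec` and each axiom of `Ec` is excluded from some repair,
then Q does not hold under IAR. -/
theorem iar_characterization {α : Type*} [DecidableEq α]
    (A T : Finset α) (hAT : Disjoint A T)
    (ent : Finset α → Prop) (cons : Finset α → Prop)
    (hent : ∀ w w' : Finset α, w ⊆ w' → ent w → ent w')
    (hanti : ∀ S S' : Finset α, S ⊆ S' → cons S' → cons S)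
    (hT : cons T)
    (Ec : Finset α)
    (hEc : ∀ a, a ∈ Ec ↔ a ∈ A ∧ ∃ C : Finset α, C ⊆ A ∪ T ∧ ¬ cons C ∧
        (∀ C' ⊆ C, ¬ cons C' → C' = C) ∧ a ∈ C)
    (D : Finset α)
    (hD : ∀ a, a ∈ D ↔ a ∈ A ∧ ∀ R : Finset α, (R ⊆ A ∧ cons (R ∪ T) ∧
        ∀ R' : Finset α, R' ⊆ A → R ⊆ R' → cons (R' ∪ T) → R' = R) → a ∈ R) :
    ((∃ J : Finset α, J ⊆ A ∪ T ∧ ent J ∧ (∀ J' ⊆ J, ent J' → J' = J) ∧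
        J ∩ Ec = ∅) → ent (D ∪ T)) ∧
    (((∀ J : Finset α, J ⊆ A ∪ T → ent J → (∀ J' ⊆ J, ent J' → J' = J) →
        (J ∩ Ec).Nonempty) ∧
      (∀ a ∈ Ec, ∃ R : Finset α, (R ⊆ A ∧ cons (R ∪ T) ∧
        ∀ R' : Finset α, R' ⊆ A → R ⊆ R' → cons (R' ∪ T) → R' = R) ∧ a ∉ R)) →
      ¬ ent (D ∪ T)) :=
  iar_characterization_general A T hAT ent cons hent hanti Ec hEc D hD
end

section
/- If the query Q holds exactly in the worlds containing a fixed justification J, and every world containing the conflict set C (disjoint from J) is inconsistent while all other worlds are consistent, and J ∩ C = ∅, then P_C(Q) = P(Q ∧ Cons)/P(Cons) = ∏_{e∈J} p(e), i.e., the conditional probability equals the unconditional probability of Q. -/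
/-!
Split every world `w ⊆ E` into its part `w ∩ J` inside the justification and its part `w \ J`
outside it. Under the product distribution these two parts are independent, the event "`Q` holds"
depends only on the first and (because `J` and `C` are disjoint) consistency depends only on the
second. Hence `P(Q ∧ Cons) = P(Q) · P(Cons)` with `P(Q) = ∏_{e ∈ J} p e`, and the conditional
probability is `P(Q)`.
-/

open Finset

section

variable {α : Type*} [DecidableEq α]

theorem Finset.sum_powerset_union_of_disjoint {β : Type*} [AddCommMonoid β] {A B : Finset α}
    (h : Disjoint A B) (f : Finset α → β) :
    ∑ w ∈ (A ∪ B).powerset, f w = ∑ s ∈ A.powerset, ∑ t ∈ B.powerset, f (s ∪ t) := by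
  induction A using Finset.induction_on generalizing f with
  | empty => simp
  | insert a A haA ih =>
    rw [disjoint_insert_left] at h
    have ha : a ∉ A ∪ B := by simp [haA, h.1]
    rw [insert_union, sum_powerset_insert ha, sum_powerset_insert haA, ih h.2, ih h.2]
    simp only [insert_union]

/-- DISPONTE probability of the world `w ⊆ E`: each `a ∈ E` belongs to it independently with
probability `p a`. -/
def worldWeight (p : α → ℝ) (E w : Finset α) : ℝ :=
  (∏ a ∈ w, p a) * ∏ a ∈ E \ w, (1 - p a)

def eventProb (p : α → ℝ) (E : Finset α) (P : Finset α → Prop) [DecidablePred P] : ℝ :=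
  ∑ w ∈ E.powerset with P w, worldWeight p E w

theorem worldWeight_union (p : α → ℝ) {A B s t : Finset α} (h : Disjoint A B)
    (hs : s ⊆ A) (ht : t ⊆ B) :
    worldWeight p (A ∪ B) (s ∪ t) = worldWeight p A s * worldWeight p B t := by
  have hst : Disjoint s t := h.mono hs ht
  have hcompl : (A ∪ B) \ (s ∪ t) = A \ s ∪ B \ t := by
    ext x
    have := disjoint_left.mp h
    grind
  have hAB : Disjoint (A \ s) (B \ t) := h.mono sdiff_subset sdiff_subset
  unfold worldWeight
  rw [prod_union hst, hcompl, prod_union hAB]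
  ring

theorem eventProb_true (p : α → ℝ) (A : Finset α) : eventProb p A (fun _ => True) = 1 := by
  rw [eventProb, filter_true_of_mem fun _ _ => trivial]
  simp [worldWeight, ← prod_add]

theorem eventProb_superset_self (p : α → ℝ) (A : Finset α) :
    eventProb p A (A ⊆ ·) = ∏ a ∈ A, p a := by
  have : A.powerset.filter (A ⊆ ·) = {A} := by
    ext s
    simp [subset_antisymm_iff, and_comm]
  simp [eventProb, this, worldWeight]

theorem eventProb_inter_sdiff_of_disjoint (p : α → ℝ) {A B : Finset α} (h : Disjoint A B)
    (P Q : Finset α → Prop) [DecidablePred P] [DecidablePred Q] :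
    eventProb p (A ∪ B) (fun w => P (w ∩ A) ∧ Q (w \ A)) = eventProb p A P * eventProb p B Q := by
  simp only [eventProb, sum_filter, sum_powerset_union_of_disjoint h, sum_mul_sum]
  refine sum_congr rfl fun s hs => sum_congr rfl fun t ht => ?_
  rw [mem_powerset] at hs ht
  have htA : Disjoint t A := (h.mono_right ht).symm
  have hA : (s ∪ t) ∩ A = s := by
    rw [union_inter_distrib_right, inter_eq_left.mpr hs, disjoint_iff_inter_eq_empty.mp htA,
      union_empty]
  have hB : (s ∪ t) \ A = t := by
    rw [union_sdiff_distrib, sdiff_eq_empty_iff_subset.mpr hs, sdiff_eq_self_of_disjoint htA,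
      empty_union]
  rw [hA, hB, worldWeight_union p h hs ht, ite_zero_mul_ite_zero]

end

theorem conditional_eq_prod_of_disjoint_conflict_general {α : Type*} [DecidableEq α]
    (E : Finset α) (p : α → ℝ)
    (J C : Finset α) (hJ : J ⊆ E) (hJC : Disjoint J C)
    (hpos : 0 < ∑ w ∈ E.powerset.filter (fun w => ¬ C ⊆ w),
        ((∏ a ∈ w, p a) * ∏ a ∈ E \ w, (1 - p a))) :
    (∑ w ∈ E.powerset.filter (fun w => J ⊆ w ∧ ¬ C ⊆ w),
        ((∏ a ∈ w, p a) * ∏ a ∈ E \ w, (1 - p a))) /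
      (∑ w ∈ E.powerset.filter (fun w => ¬ C ⊆ w),
        ((∏ a ∈ w, p a) * ∏ a ∈ E \ w, (1 - p a)))
    = ∏ e ∈ J, p e := by
  change eventProb p E _ / eventProb p E _ = _
  change 0 < eventProb p E _ at hpos
  have hcons : ∀ w : Finset α, C ⊆ w \ J ↔ C ⊆ w := fun w => by
    simp [subset_sdiff, hJC.symm]
  have hsplit (P : Finset α → Prop) [DecidablePred P] :
      eventProb p E (fun w => P (w ∩ J) ∧ ¬ C ⊆ w) =
        eventProb p J P * eventProb p (E \ J) (fun t => ¬ C ⊆ t) := by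
    rw [← eventProb_inter_sdiff_of_disjoint p disjoint_sdiff, union_sdiff_of_subset hJ]
    simp only [hcons]
  have hnum := hsplit (J ⊆ ·)
  have hden := hsplit (fun _ => True)
  simp only [subset_inter_iff, subset_refl, and_true, true_and, eventProb_superset_self,
    eventProb_true, one_mul] at hnum hden
  rw [hden] at hpos ⊢
  rw [hnum, mul_div_cancel_right₀ _ hpos.ne']

/-- If Q holds exactly in worlds containing justification J, inconsistency holds exactly in
worlds containing conflict C, and J, C are disjoint, then P_C(Q) = ∏_{e∈J} p e = P(Q). -/
theorem conditional_eq_prod_of_disjoint_conflict {α : Type*} [DecidableEq α]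
    (E : Finset α) (p : α → ℝ) (hp : ∀ e ∈ E, 0 ≤ p e ∧ p e ≤ 1)
    (J C : Finset α) (hJ : J ⊆ E) (hC : C ⊆ E) (hJC : Disjoint J C)
    (hpos : 0 < ∑ w ∈ E.powerset.filter (fun w => ¬ C ⊆ w),
        ((∏ a ∈ w, p a) * ∏ a ∈ E \ w, (1 - p a))) :
    (∑ w ∈ E.powerset.filter (fun w => J ⊆ w ∧ ¬ C ⊆ w),
        ((∏ a ∈ w, p a) * ∏ a ∈ E \ w, (1 - p a))) /
      (∑ w ∈ E.powerset.filter (fun w => ¬ C ⊆ w),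
        ((∏ a ∈ w, p a) * ∏ a ∈ E \ w, (1 - p a)))
    = ∏ e ∈ J, p e :=
  conditional_eq_prod_of_disjoint_conflict_general E p J C hJ hJC hpos
end
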